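/- Let (R,m) be a regular local ring of dimension n with regular system of parameters (x, y_1,...,y_{n−1}), and let f = Σ_j a_j(y)·x^j ∈ R with a_j in the subring generated by y. Fix c ≥ 1. For the blowup chart substitution x ↦ y_1·x, y_1 ↦ y_1, y_i ↦ y_1·y_i (i ≥ 2) with center {x = y_1 = ... = y_{n−1} = 0}-type center contained in {x = 0}: the coefficients of the weak transform satisfy a'_{j} = y_1^{j−c}·a_j^*, where a_j^* is the total transform of a_j. Consequently the controlled transform (with control c) of the coefficient ideal of f equals the coefficient ideal of the weak transform of f, at points where the order c is preserved. -/
import Mathlib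


noncomputable section

variable {K : Type*} [Field K] {m : ℕ}

/-- The coefficient ring `A = K[y_1,...,y_m]` (with `y_1` the variable of index `0`). -/
abbrev CoeffRing (K : Type*) [Field K] (m : ℕ) := MvPolynomial (Fin (m + 1)) K

/-- The exceptional variable `y_1`. -/
def yOne (K : Type*) [Field K] (m : ℕ) : CoeffRing K m := MvPolynomial.X 0

/-- The blowup substitution on the `y`-variables: `y_1 ↦ y_1`, `y_i ↦ y_1·y_i` (`i ≥ 2`). -/
def substA (K : Type*) [Field K] (m : ℕ) : CoeffRing K m →+* CoeffRing K m :=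
  (MvPolynomial.aeval (fun i : Fin (m + 1) =>
    if (i : ℕ) = 0 then MvPolynomial.X 0
    else MvPolynomial.X 0 * MvPolynomial.X i)).toRingHom

/-- The blowup substitution on `R = A[x]`: coefficients via `substA`, and `x ↦ y_1·x`. -/
def substR (K : Type*) [Field K] (m : ℕ) :
    Polynomial (CoeffRing K m) →+* Polynomial (CoeffRing K m) :=
  Polynomial.eval₂RingHom (Polynomial.C.comp (substA K m))
    (Polynomial.C (yOne K m) * Polynomial.X)

/-- The coefficient ideal of `f = Σ_j a_j x^j` with control `c`:
`Σ_{j<c} (a_j)^{c!/(c−j)}`. -/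
def coeffIdeal (c : ℕ) (f : Polynomial (CoeffRing K m)) : Ideal (CoeffRing K m) :=
  ∑ j ∈ Finset.range c, Ideal.span {f.coeff j} ^ (Nat.factorial c / (c - j))

lemma coeff_substR (f : Polynomial (CoeffRing K m)) (j : ℕ) :
    (substR K m f).coeff j = yOne K m ^ j * substA K m (f.coeff j) := by
  induction f using Polynomial.induction_on' with
  | add p q hp hq =>
    simp [map_add, Polynomial.coeff_add, hp, hq, mul_add]
  | monomial n a =>
    have h1 : substR K m (Polynomial.monomial n a) =
        Polynomial.C (substA K m a * yOne K m ^ n) * Polynomial.X ^ n := by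
      rw [← Polynomial.C_mul_X_pow_eq_monomial, map_mul, map_pow]
      have hC : substR K m (Polynomial.C a) = Polynomial.C (substA K m a) := by
        simp [substR, Polynomial.eval₂_C]
      have hX : substR K m Polynomial.X = Polynomial.C (yOne K m) * Polynomial.X := by
        simp [substR]
      rw [hC, hX, mul_pow, ← Polynomial.C_pow, ← mul_assoc, ← map_mul]
    rw [h1, Polynomial.coeff_C_mul, Polynomial.coeff_X_pow,
      Polynomial.coeff_monomial]
    by_cases h : j = n
    · subst h; simp [mul_comm]
    · simp [h, Ne.symm h]

/-- Commutation of coefficient ideals with blowup.  If `f' ` is the weak transform of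
`f = Σ_j a_j(y) x^j` with control `c` under the blowup chart `x ↦ y_1 x`,
`y_i ↦ y_1 y_i` (`i ≥ 2`), i.e. `σ(f) = y_1^c·f'`, then the coefficients satisfy
`a'_j = y_1^{j−c}·a_j^*` (that is, `y_1^c·a'_j = y_1^j·σ(a_j)`), and the controlled
transform (with control `c!`) of the coefficient ideal of `f` is the coefficient
ideal of `f'`. -/
theorem coeffIdeal_comm_blowup (c : ℕ) (hc : 1 ≤ c)
    (f f' : Polynomial (CoeffRing K m))
    (hweak : substR K m f = Polynomial.C (yOne K m) ^ c * f') :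
    (∀ j : ℕ, yOne K m ^ c * f'.coeff j = yOne K m ^ j * substA K m (f.coeff j)) ∧
    Ideal.map (substA K m) (coeffIdeal c f) =
      Ideal.span {yOne K m ^ Nat.factorial c} * coeffIdeal c f' := by
  have hcoeff : ∀ j : ℕ, yOne K m ^ c * f'.coeff j
      = yOne K m ^ j * substA K m (f.coeff j) := by
    intro j
    have h := congrArg (fun p => Polynomial.coeff p j) hweak
    simp only [coeff_substR] at h
    rw [← Polynomial.C_pow, Polynomial.coeff_C_mul] at h
    exact h.symm
  refine ⟨hcoeff, ?_⟩
  have hy : ∀ j < c, substA K m (f.coeff j) = yOne K m ^ (c - j) * f'.coeff j := by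
    intro j hj
    have h := hcoeff j
    have hx : yOne K m ^ j ≠ 0 := pow_ne_zero _ (MvPolynomial.X_ne_zero 0)
    apply mul_left_cancel₀ hx
    rw [← h, ← mul_assoc, ← pow_add]
    congr 2
    omega
  have key : ∀ j < c,
      Ideal.map (substA K m) (Ideal.span {f.coeff j} ^ (Nat.factorial c / (c - j)))
      = Ideal.span {yOne K m ^ Nat.factorial c}
        * Ideal.span {f'.coeff j} ^ (Nat.factorial c / (c - j)) := by
    intro j hj
    rw [Ideal.map_pow, Ideal.map_span, Set.image_singleton, hy j hj,
      Ideal.span_singleton_pow, mul_pow, ← pow_mul,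
      Nat.mul_div_cancel' (Nat.dvd_factorial (by omega) (by omega)),
      ← Ideal.span_singleton_mul_span_singleton,
      ← Ideal.span_singleton_pow (f'.coeff j)]
  unfold coeffIdeal
  rw [show Ideal.map (substA K m)
        (∑ j ∈ Finset.range c, Ideal.span {f.coeff j} ^ (Nat.factorial c / (c - j)))
      = Ideal.mapHom (substA K m)
        (∑ j ∈ Finset.range c, Ideal.span {f.coeff j} ^ (Nat.factorial c / (c - j)))
      from rfl, map_sum, Finset.mul_sum]
  refine Finset.sum_congr rfl fun j hj => ?_
  rw [Finset.mem_range] at hj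
  exact key j hj
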